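/- For an integer r ≥ 0 and τ ∈ ℂ define c_r(τ) := √π·2^{r−τ}·(−1)^r·Γ(1/2 + r − τ)·Γ(−r + 2τ)/(r!·Γ(1/2 + τ)·Γ(1/2 − τ)). Then for every integer r ≥ 0, as τ → −1/2 (through values where the expression is defined), c_r(τ) tends to −2^{r+1/2}·√π/(2·(r+1)!). -/
import Mathlib


open Complex Topology

/-- The residue factor
`c_r(τ) = √π 2^{r−τ} (−1)^r Γ(1/2+r−τ) Γ(−r+2τ) / (r! Γ(1/2+τ) Γ(1/2−τ))`. -/
noncomputable def cResidue (r : ℕ) (τ : ℂ) : ℂ :=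
  (Real.sqrt Real.pi : ℂ) * 2 ^ ((r : ℂ) - τ) * (-1) ^ r *
    Complex.Gamma (1 / 2 + (r : ℂ) - τ) * Complex.Gamma (-(r : ℂ) + 2 * τ) /
    ((r.factorial : ℂ) * Complex.Gamma (1 / 2 + τ) * Complex.Gamma (1 / 2 - τ))

/-- The set of `τ` at which the expression `c_r(τ)` is defined, i.e. none of the four
Gamma factors is evaluated at a pole (a nonpositive integer). -/
def cResidueDom (r : ℕ) : Set ℂ :=
  {τ : ℂ | (∀ m : ℕ, -(r : ℂ) + 2 * τ ≠ -(m : ℂ)) ∧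
    (∀ m : ℕ, (1 : ℂ) / 2 + (r : ℂ) - τ ≠ -(m : ℂ)) ∧
    (∀ m : ℕ, (1 : ℂ) / 2 + τ ≠ -(m : ℂ)) ∧
    (∀ m : ℕ, (1 : ℂ) / 2 - τ ≠ -(m : ℂ))}

lemma gamma_shift (z : ℂ) (n : ℕ) (h : ∀ k < n, z + k ≠ 0) :
    Complex.Gamma (z + n) = (∏ k ∈ Finset.range n, (z + k)) * Complex.Gamma z := by
  induction n with
  | zero => simp
  | succ n ih =>
    have hz : z + n ≠ 0 := h n (Nat.lt_succ_self n)
    have : z + (n + 1 : ℕ) = (z + n) + 1 := by push_cast; ring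
    rw [this, Complex.Gamma_add_one _ hz, ih (fun k hk => h k (hk.trans (Nat.lt_succ_self n))),
      Finset.prod_range_succ]
    ring

lemma prod_sub_val (n : ℕ) : ∏ k ∈ Finset.range n, ((k : ℂ) - n) = (-1) ^ n * n.factorial := by
  have h1 : ∀ n : ℕ, ∏ k ∈ Finset.range n, ((n : ℂ) - k) = n.factorial := by
    intro n
    induction n with
    | zero => simp
    | succ n ih =>
      rw [Finset.prod_range_succ']
      have : ∀ k, ((n : ℂ) + 1 - (k + 1)) = (n : ℂ) - k := by intro k; push_cast; ring
      push_cast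
      simp only [this]
      rw [ih, Nat.factorial_succ]
      push_cast
      ring
  calc ∏ k ∈ Finset.range n, ((k : ℂ) - n) = ∏ k ∈ Finset.range n, (-1) * ((n : ℂ) - k) := by
        apply Finset.prod_congr rfl; intros; ring
    _ = (-1) ^ n * n.factorial := by
        rw [Finset.prod_mul_distrib, Finset.prod_const, Finset.card_range, h1]

noncomputable def hfun (r : ℕ) (τ : ℂ) : ℂ :=
  (Real.sqrt Real.pi : ℂ) * 2 ^ ((r : ℂ) - τ) * (-1) ^ r *
    Complex.Gamma (1 / 2 + (r : ℂ) - τ) * Complex.Gamma (2 * τ + 2) /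
    ((r.factorial : ℂ) * 2 * (∏ k ∈ Finset.range (r + 1), (2 * τ - r + k)) *
      Complex.Gamma (3 / 2 + τ) * Complex.Gamma (1 / 2 - τ))

lemma eq_on_dom (r : ℕ) (τ : ℂ) (hτ : τ ∈ cResidueDom r) : cResidue r τ = hfun r τ := by
  obtain ⟨h1, h2, h3, h4⟩ := hτ
  have hk : ∀ k : ℕ, 2 * τ - r + k ≠ 0 := by
    intro k hk0
    exact h1 k (by linear_combination hk0)
  have hτ0 : (1 : ℂ) / 2 + τ ≠ 0 := by
    have := h3 0; simpa using this
  have hG2 : Complex.Gamma (2 * τ + 2) =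
      (∏ k ∈ Finset.range (r + 2), (2 * τ - r + k)) * Complex.Gamma (2 * τ - r) := by
    have := gamma_shift (2 * τ - r) (r + 2) (fun k _ => hk k)
    rw [show 2 * τ - r + ((r + 2 : ℕ) : ℂ) = 2 * τ + 2 by push_cast; ring] at this
    exact this
  have hG1 : Complex.Gamma (3 / 2 + τ) = (1 / 2 + τ) * Complex.Gamma (1 / 2 + τ) := by
    have := Complex.Gamma_add_one _ hτ0
    rw [show (1 : ℂ) / 2 + τ + 1 = 3 / 2 + τ by ring] at this
    exact this
  have hGp : Complex.Gamma (1 / 2 + τ) ≠ 0 := Complex.Gamma_ne_zero h3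
  have hGm : Complex.Gamma (1 / 2 - τ) ≠ 0 := Complex.Gamma_ne_zero h4
  have hP1 : (∏ k ∈ Finset.range (r + 1), (2 * τ - r + k)) ≠ 0 :=
    Finset.prod_ne_zero_iff.mpr (fun k _ => hk k)
  have hfac : ((r.factorial : ℂ)) ≠ 0 := Nat.cast_ne_zero.mpr r.factorial_ne_zero
  have hG3 : Complex.Gamma (3 / 2 + τ) ≠ 0 := by
    rw [hG1]; exact mul_ne_zero hτ0 hGp
  rw [cResidue, hfun, show -(r : ℂ) + 2 * τ = 2 * τ - r by ring]
  rw [div_eq_div_iff (by exact mul_ne_zero (mul_ne_zero hfac hGp) hGm)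
    (by exact mul_ne_zero (mul_ne_zero (mul_ne_zero (mul_ne_zero hfac two_ne_zero) hP1) hG3) hGm)]
  rw [hG2, hG1]
  simp only [Finset.prod_range_succ]
  push_cast
  ring

lemma nat_succ_ne_neg (n : ℕ) : ∀ m : ℕ, ((n : ℂ) + 1) ≠ -(m : ℂ) := by
  intro m h
  have h1 : (n : ℂ) + 1 + m = 0 := by linear_combination h
  have h2 : (n + 1 + m : ℕ) = 0 := by exact_mod_cast h1
  omega

lemma one_ne_neg : ∀ m : ℕ, (1 : ℂ) ≠ -(m : ℂ) := by
  have := nat_succ_ne_neg 0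
  simpa using this

lemma hfun_cont (r : ℕ) : ContinuousAt (hfun r) (-(1 : ℂ) / 2) := by
  have c0 : ContinuousAt (fun τ : ℂ => (2 : ℂ) ^ ((r : ℂ) - τ)) (-(1:ℂ)/2) :=
    (continuousAt_const_cpow two_ne_zero).comp
      ((continuous_const.sub continuous_id).continuousAt)
  have c1 : ContinuousAt (fun τ : ℂ => Complex.Gamma (1 / 2 + (r : ℂ) - τ)) (-(1:ℂ)/2) := by
    refine ContinuousAt.comp ?_ ((continuous_const.sub continuous_id).continuousAt)
    refine (Complex.differentiableAt_Gamma _ ?_).continuousAt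
    rw [show (1 : ℂ) / 2 + (r : ℂ) - (-(1:ℂ)/2) = (r : ℂ) + 1 by ring]
    exact nat_succ_ne_neg r
  have c2 : ContinuousAt (fun τ : ℂ => Complex.Gamma (2 * τ + 2)) (-(1:ℂ)/2) := by
    refine ContinuousAt.comp ?_ (((continuous_const.mul continuous_id).add continuous_const).continuousAt)
    refine (Complex.differentiableAt_Gamma _ ?_).continuousAt
    rw [show 2 * (-(1:ℂ)/2) + 2 = 1 by ring]
    exact one_ne_neg
  have c3 : ContinuousAt (fun τ : ℂ => Complex.Gamma (3 / 2 + τ)) (-(1:ℂ)/2) := by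
    refine ContinuousAt.comp ?_ ((continuous_const.add continuous_id).continuousAt)
    refine (Complex.differentiableAt_Gamma _ ?_).continuousAt
    rw [show (3:ℂ) / 2 + (-(1:ℂ)/2) = 1 by ring]
    exact one_ne_neg
  have c4 : ContinuousAt (fun τ : ℂ => Complex.Gamma (1 / 2 - τ)) (-(1:ℂ)/2) := by
    refine ContinuousAt.comp ?_ ((continuous_const.sub continuous_id).continuousAt)
    refine (Complex.differentiableAt_Gamma _ ?_).continuousAt
    rw [show (1:ℂ) / 2 - (-(1:ℂ)/2) = 1 by ring]
    exact one_ne_neg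
  have cP : ContinuousAt (fun τ : ℂ => ∏ k ∈ Finset.range (r + 1), (2 * τ - r + k)) (-(1:ℂ)/2) := by
    apply Continuous.continuousAt
    exact continuous_finset_prod _ (fun k _ => by continuity)
  have hden : ((r.factorial : ℂ) * 2 * (∏ k ∈ Finset.range (r + 1), (2 * (-(1:ℂ)/2) - r + k)) *
      Complex.Gamma (3 / 2 + (-(1:ℂ)/2)) * Complex.Gamma (1 / 2 - (-(1:ℂ)/2))) ≠ 0 := by
    have hP : (∏ k ∈ Finset.range (r + 1), (2 * (-(1:ℂ)/2) - r + k)) ≠ 0 := by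
      apply Finset.prod_ne_zero_iff.mpr
      intro k hk
      have hkr : k < r + 1 := Finset.mem_range.mp hk
      intro h0
      have : ((k : ℂ)) = (r : ℂ) + 1 := by linear_combination h0
      have h2 : ((k : ℕ) : ℂ) = ((r + 1 : ℕ) : ℂ) := by push_cast; linear_combination this
      have h3 : k = r + 1 := Nat.cast_inj.mp h2
      omega
    have hG3 : Complex.Gamma (3 / 2 + (-(1:ℂ)/2)) ≠ 0 := by
      rw [show (3:ℂ) / 2 + (-(1:ℂ)/2) = 1 by ring, Complex.Gamma_one]; norm_num
    have hG4 : Complex.Gamma (1 / 2 - (-(1:ℂ)/2)) ≠ 0 := by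
      rw [show (1:ℂ) / 2 - (-(1:ℂ)/2) = 1 by ring, Complex.Gamma_one]; norm_num
    exact mul_ne_zero (mul_ne_zero (mul_ne_zero
      (mul_ne_zero (Nat.cast_ne_zero.mpr r.factorial_ne_zero) two_ne_zero) hP) hG3) hG4
  unfold hfun
  exact ((((continuousAt_const.mul c0).mul continuousAt_const).mul c1).mul c2).div
    ((((continuousAt_const.mul cP).mul c3).mul c4)) hden

lemma hfun_val (r : ℕ) : hfun r (-(1 : ℂ) / 2) =
    -((2 : ℂ) ^ ((r : ℂ) + 1 / 2) * (Real.sqrt Real.pi : ℂ) /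
        (2 * ((r + 1).factorial : ℂ))) := by
  unfold hfun
  rw [show (r : ℂ) - (-(1:ℂ)/2) = (r : ℂ) + 1/2 by ring]
  rw [show (1:ℂ) / 2 + (r : ℂ) - (-(1:ℂ)/2) = ((r : ℕ) : ℂ) + 1 by push_cast; ring]
  rw [Complex.Gamma_nat_eq_factorial]
  rw [show 2 * (-(1:ℂ)/2) + 2 = 1 by ring, show (3:ℂ)/2 + (-(1:ℂ)/2) = 1 by ring,
    show (1:ℂ)/2 - (-(1:ℂ)/2) = 1 by ring, Complex.Gamma_one]
  have hP : (∏ k ∈ Finset.range (r + 1), (2 * (-(1:ℂ)/2) - r + k)) =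
      (-1) ^ (r + 1) * ((r + 1).factorial : ℂ) := by
    rw [← prod_sub_val (r + 1)]
    apply Finset.prod_congr rfl
    intro k _
    push_cast
    ring
  rw [hP]
  have hfac : ((r.factorial : ℂ)) ≠ 0 := Nat.cast_ne_zero.mpr r.factorial_ne_zero
  have hfac1 : (((r + 1).factorial : ℂ)) ≠ 0 := Nat.cast_ne_zero.mpr (r + 1).factorial_ne_zero
  rw [pow_succ]
  field_simp

/-- For every `r ≥ 0`, as `τ → −1/2` through values where it is
defined, `c_r(τ) → −2^{r+1/2} √π / (2 · (r+1)!)`. -/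
theorem stmt17 (r : ℕ) :
    Filter.Tendsto (cResidue r) (𝓝[cResidueDom r] (-(1 : ℂ) / 2))
      (𝓝 (-((2 : ℂ) ^ ((r : ℂ) + 1 / 2) * (Real.sqrt Real.pi : ℂ) /
        (2 * ((r + 1).factorial : ℂ))))) := by
  have h : Filter.Tendsto (hfun r) (𝓝[cResidueDom r] (-(1 : ℂ) / 2))
      (𝓝 (hfun r (-(1 : ℂ) / 2))) :=
    ((hfun_cont r).continuousWithinAt).tendsto
  rw [hfun_val] at h
  refine h.congr' ?_
  filter_upwards [self_mem_nhdsWithin] with τ hτ using (eq_on_dom r τ hτ).symm
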